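/- Let M ∈ EuclideanSpace ℝ (Fin 3), R > 0, let N = closedBall(M, R), let u be a unit vector and 0 < h ≤ R. Define the spherical cap C = {x ∈ N : ⟪u, x − M⟫ ≥ R − h} and the smaller cap C₁ = {x ∈ N : ⟪u, x − M⟫ ≥ R − h/2}. Let P ⊆ N \ C be a finite nonempty set of points and let A ∈ C. Then the center c of a smallest enclosing ball of P ∪ {A} does not lie in C₁, i.e. ⟪u, c − M⟫ < R − h/2. -/

import Mathlib

/-!
The centre of a smallest enclosing ball of a finite set lies in the convex hull of the points on
its boundary sphere: otherwise pushing the centre slightly towards that hull would bring every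
point strictly inside a ball of the same radius. In a convex combination of points of a sphere
that equals its centre, no point carries weight more than `1/2`. Since `x ↦ ⟪u, x - M⟫` is affine,
its value at the centre is the same combination of its values at the contact points: those of `P`
lie below `R - h`, while `A`, of weight at most `1/2`, lies at most at `R`; so the centre lies
below `R - h/2`.
-/

open Metric
open scoped RealInnerProductSpace

/-- `closedBall c r` is a smallest enclosing ball of `P`: it contains `P` and every
closed ball containing `P` has radius at least `r`. -/
def IsSEB {E : Type*} [NormedAddCommGroup E] [InnerProductSpace ℝ E]
    (P : Set E) (c : E) (r : ℝ) : Prop :=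
  P ⊆ closedBall c r ∧ ∀ c' r', P ⊆ closedBall c' r' → r ≤ r'

open Filter Topology

section

variable {E : Type*} [NormedAddCommGroup E] [InnerProductSpace ℝ E]

theorem exists_forall_inner_sub_pos_of_notMem {K : Set E} (hK : Convex ℝ K)
    (hKc : IsComplete K) {c : E} (hc : c ∉ K) : ∃ e : E, ∀ x ∈ K, 0 < ⟪e, x - c⟫ := by
  rcases K.eq_empty_or_nonempty with rfl | hne
  · exact ⟨0, by simp⟩
  obtain ⟨p, hpK, hp⟩ := exists_norm_eq_iInf_of_complete_convex hne hKc hK c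
  have hpc : 0 < ‖p - c‖ := norm_pos_iff.mpr (sub_ne_zero.mpr fun h => hc (h ▸ hpK))
  refine ⟨p - c, fun x hx => ?_⟩
  have hvar := (norm_eq_iInf_iff_real_inner_le_zero hK hpK).mp hp x hx
  have hsplit : ⟪p - c, x - c⟫ = ‖p - c‖ ^ 2 - ⟪c - p, x - p⟫ := by
    rw [← real_inner_self_eq_norm_sq, ← neg_sub p c, inner_neg_left]
    rw [show x - c = (x - p) + (p - c) by abel, inner_add_right]
    ring
  rw [hsplit]
  nlinarith

theorem eventually_dist_add_smul_lt {x c e : E} {r : ℝ} (hx : dist x c ≤ r)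
    (he : dist x c = r → 0 < ⟪e, x - c⟫) : ∀ᶠ t in 𝓝[>] (0 : ℝ), dist x (c + t • e) < r := by
  rcases hx.lt_or_eq with hlt | heq
  · have hcont : Continuous fun t : ℝ => dist x (c + t • e) := by fun_prop
    have := hcont.tendsto 0
    simp only [zero_smul, add_zero] at this
    exact nhdsWithin_le_nhds (this.eventually (gt_mem_nhds hlt))
  · set g : ℝ → ℝ := fun t => 2 * ⟪e, x - c⟫ - t * ‖e‖ ^ 2
    have hlim : Tendsto g (𝓝 0) (𝓝 (2 * ⟪e, x - c⟫)) := by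
      have : Continuous g := by fun_prop
      simpa [g] using this.tendsto 0
    have hg0 : (0 : ℝ) < 2 * ⟪e, x - c⟫ := by linarith [he heq]
    filter_upwards [self_mem_nhdsWithin, nhdsWithin_le_nhds (hlim.eventually (lt_mem_nhds hg0))]
      with t ht hpos
    have hsq : dist x (c + t • e) ^ 2 = r ^ 2 - t * g t := by
      rw [dist_eq_norm, show x - (c + t • e) = (x - c) - t • e by abel, norm_sub_sq_real,
        ← dist_eq_norm, heq, norm_smul, real_inner_smul_right, Real.norm_eq_abs, abs_of_pos ht,
        real_inner_comm]
      ring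
    have hr : 0 ≤ r := heq ▸ dist_nonneg
    nlinarith [dist_nonneg (x := x) (y := c + t • e), mul_pos ht hpos]

theorem IsSEB.radius_pos {S : Set E} {c : E} {r : ℝ} (h : IsSEB S c r) {x y : E} (hx : x ∈ S)
    (hy : y ∈ S) (hxy : x ≠ y) : 0 < r := by
  have hxc := mem_closedBall.mp (h.1 hx)
  have hyc := mem_closedBall.mp (h.1 hy)
  linarith [dist_pos.mpr hxy, dist_triangle_right x y c]

theorem IsSEB.exists_le_dist {Q : Finset E} {c : E} {r : ℝ} (h : IsSEB (Q : Set E) c r)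
    (c' : E) : ∃ x ∈ Q, r ≤ dist x c' := by
  rcases Q.eq_empty_or_nonempty with rfl | hne
  · have := h.2 c' (r - 1) (by simp)
    linarith
  obtain ⟨x, hx, hmax⟩ := Q.exists_max_image (dist · c') hne
  exact ⟨x, hx, h.2 c' _ fun y hy => mem_closedBall.mpr (hmax y hy)⟩

theorem IsSEB.mem_convexHull_filter_dist_eq [DecidableEq E] {Q : Finset E} {c : E} {r : ℝ}
    (h : IsSEB (Q : Set E) c r) :
    c ∈ convexHull ℝ ((Q.filter fun x => dist x c = r : Finset E) : Set E) := by
  by_contra hc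
  obtain ⟨e, he⟩ := exists_forall_inner_sub_pos_of_notMem (convex_convexHull ℝ _)
    (((Finset.finite_toSet _).isCompact_convexHull (𝕜 := ℝ)).isComplete) hc
  have hnear : ∀ᶠ t in 𝓝[>] (0 : ℝ), ∀ x ∈ Q, dist x (c + t • e) < r := by
    refine (Filter.eventually_all_finset Q).mpr fun x hx => eventually_dist_add_smul_lt
      (mem_closedBall.mp (h.1 hx)) fun hxr => he x (subset_convexHull ℝ _ ?_)
    simp [hx, hxr]
  obtain ⟨t, ht⟩ := hnear.exists
  obtain ⟨x, hx, hrx⟩ := h.exists_le_dist (c + t • e)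
  exact (ht x hx).not_ge hrx

/-- Pairing `∑ w x • (x - c) = 0` with `a - c` gives `∑ w x * (⟪x - c, a - c⟫ + r²) = r²`,
a sum of nonnegative terms whose `a`-term is `2 * w a * r²`. -/
theorem weight_le_half_of_sum_smul_eq_center {T : Finset E} {w : E → ℝ} {c a : E} {r : ℝ}
    (hr : 0 < r) (hw0 : ∀ x ∈ T, 0 ≤ w x) (hw1 : ∑ x ∈ T, w x = 1)
    (hwc : ∑ x ∈ T, w x • x = c) (hT : ∀ x ∈ T, dist x c = r) (ha : a ∈ T) : w a ≤ 1 / 2 := by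
  have hbal : ∑ x ∈ T, w x • (x - c) = 0 := by
    simp only [smul_sub, Finset.sum_sub_distrib, ← Finset.sum_smul, hwc, hw1, one_smul, sub_self]
  have hnorm : ∀ x ∈ T, ‖x - c‖ = r := fun x hx => by rw [← dist_eq_norm, hT x hx]
  have hterm : ∀ x ∈ T, 0 ≤ w x * (⟪x - c, a - c⟫ + r ^ 2) := fun x hx => by
    have hcs := neg_le_of_abs_le (abs_real_inner_le_norm (x - c) (a - c))
    rw [hnorm x hx, hnorm a ha] at hcs
    exact mul_nonneg (hw0 x hx) (by nlinarith)
  have hsum : ∑ x ∈ T, w x * (⟪x - c, a - c⟫ + r ^ 2) = r ^ 2 := by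
    simp only [mul_add, Finset.sum_add_distrib, ← Finset.sum_mul, hw1, one_mul,
      ← real_inner_smul_left, ← sum_inner, hbal, inner_zero_left, zero_add]
  have hsingle := Finset.single_le_sum hterm ha
  rw [hsum, real_inner_self_eq_norm_sq, hnorm a ha] at hsingle
  nlinarith [pow_pos hr 2]

theorem inner_sub_eq_sum_of_sum_smul_eq {T : Finset E} {w : E → ℝ} {c : E}
    (hw1 : ∑ x ∈ T, w x = 1) (hwc : ∑ x ∈ T, w x • x = c) (u M : E) :
    ⟪u, c - M⟫ = ∑ x ∈ T, w x * ⟪u, x - M⟫ := by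
  have hcM : c - M = ∑ x ∈ T, w x • (x - M) := by
    simp only [smul_sub, Finset.sum_sub_distrib, ← Finset.sum_smul, hw1, one_smul, hwc]
  simp only [hcM, inner_sum, real_inner_smul_right]

end

theorem Finset.sum_mul_lt_sum_mul_of_lt {ι : Type*} {s : Finset ι} {w g : ι → ℝ} {b : ℝ}
    (hw0 : ∀ i ∈ s, 0 ≤ w i) (hw : 0 < ∑ i ∈ s, w i) (hg : ∀ i ∈ s, g i < b) :
    ∑ i ∈ s, w i * g i < (∑ i ∈ s, w i) * b := by
  obtain ⟨i, hi, hwi⟩ := Finset.exists_lt_of_sum_lt (f := fun _ => (0 : ℝ)) (g := w)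
    (by rwa [Finset.sum_const_zero])
  rw [Finset.sum_mul]
  exact Finset.sum_lt_sum (fun j hj => mul_le_mul_of_nonneg_left (hg j hj).le (hw0 j hj))
    ⟨i, hi, mul_lt_mul_of_pos_left (hg i hi) hwi⟩

theorem Finset.sum_mul_lt_of_weight_le_half {ι : Type*} [DecidableEq ι] {s : Finset ι}
    {w g : ι → ℝ} {a : ι} {b h : ℝ} (hh : 0 < h) (hw0 : ∀ i ∈ s, 0 ≤ w i)
    (hw1 : ∑ i ∈ s, w i = 1) (hwa : a ∈ s → w a ≤ 1 / 2) (hga : a ∈ s → g a ≤ b + h)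
    (hg : ∀ i ∈ s.erase a, g i < b) : ∑ i ∈ s, w i * g i < b + h / 2 := by
  by_cases ha : a ∈ s
  · have hrest : ∑ i ∈ s.erase a, w i = 1 - w a := by
      rw [← hw1, ← Finset.sum_erase_add s w ha, add_sub_cancel_right]
    have hlt := Finset.sum_mul_lt_sum_mul_of_lt (fun i hi => hw0 i (Finset.mem_of_mem_erase hi))
      (by linarith [hwa ha]) hg
    rw [hrest] at hlt
    rw [← Finset.sum_erase_add s _ ha]
    nlinarith [mul_le_mul_of_nonneg_left (hga ha) (hw0 a ha), hwa ha]
  · rw [Finset.erase_eq_of_notMem ha] at hg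
    have hlt := Finset.sum_mul_lt_sum_mul_of_lt hw0 (by linarith) hg
    rw [hw1] at hlt
    linarith

theorem stmt6_general (M : EuclideanSpace ℝ (Fin 3)) (R : ℝ)
    (u : EuclideanSpace ℝ (Fin 3)) (hu : ‖u‖ = 1) (h : ℝ) (hh : 0 < h)
    (C : Set (EuclideanSpace ℝ (Fin 3)))
    (hC : C = {x ∈ closedBall M R | ⟪u, x - M⟫ ≥ R - h})
    (P : Finset (EuclideanSpace ℝ (Fin 3))) (hP : P.Nonempty)
    (hPN : ↑P ⊆ closedBall M R \ C)
    (A : EuclideanSpace ℝ (Fin 3)) (hA : A ∈ C)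
    (c : EuclideanSpace ℝ (Fin 3)) (r : ℝ)
    (hSEB : IsSEB (↑P ∪ {A}) c r) :
    ⟪u, c - M⟫ < R - h / 2 := by
  classical
  subst hC
  rw [Set.union_singleton, ← Finset.coe_insert] at hSEB
  have hAup : ⟪u, A - M⟫ ≤ R := by
    have := real_inner_le_norm u (A - M)
    rw [hu, one_mul, ← dist_eq_norm] at this
    exact this.trans (mem_closedBall.mp hA.1)
  obtain ⟨p, hp⟩ := hP
  have hr : 0 < r := hSEB.radius_pos (Finset.mem_insert_of_mem hp) (Finset.mem_insert_self A P)
    fun hpA => (hPN hp).2 (hpA ▸ hA)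
  set T := (insert A P).filter fun x => dist x c = r
  obtain ⟨w, hw0, hw1, hwc⟩ := Finset.mem_convexHull'.mp hSEB.mem_convexHull_filter_dist_eq
  have hTP : ∀ x ∈ T.erase A, ⟪u, x - M⟫ < R - h := fun x hx => by
    obtain ⟨hxA, hxT⟩ := Finset.mem_erase.mp hx
    have hxP := (Finset.mem_insert.mp (Finset.mem_filter.mp hxT).1).resolve_left hxA
    exact lt_of_not_ge fun hge => (hPN hxP).2 ⟨(hPN hxP).1, hge⟩
  rw [inner_sub_eq_sum_of_sum_smul_eq hw1 hwc]
  have hwA : A ∈ T → w A ≤ 1 / 2 := weight_le_half_of_sum_smul_eq_center hr hw0 hw1 hwc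
    fun x hx => (Finset.mem_filter.mp hx).2
  have := Finset.sum_mul_lt_of_weight_le_half hh hw0 hw1 hwA (fun _ => by linarith) hTP
  linarith

theorem stmt6 (M : EuclideanSpace ℝ (Fin 3)) (R : ℝ) (hR : 0 < R)
    (u : EuclideanSpace ℝ (Fin 3)) (hu : ‖u‖ = 1) (h : ℝ) (hh : 0 < h) (hhR : h ≤ R)
    (C : Set (EuclideanSpace ℝ (Fin 3)))
    (hC : C = {x ∈ closedBall M R | ⟪u, x - M⟫ ≥ R - h})
    (P : Finset (EuclideanSpace ℝ (Fin 3))) (hP : P.Nonempty)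
    (hPN : ↑P ⊆ closedBall M R \ C)
    (A : EuclideanSpace ℝ (Fin 3)) (hA : A ∈ C)
    (c : EuclideanSpace ℝ (Fin 3)) (r : ℝ)
    (hSEB : IsSEB (↑P ∪ {A}) c r) :
    ⟪u, c - M⟫ < R - h / 2 :=
  stmt6_general M R u hu h hh C hC P hP hPN A hA c r hSEB
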